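/- arXiv:1001.2094 — 3 statements merged into one kernel-verified Lean document; each statement's English description precedes it below -/
import Mathlib

section
/- Let H be a Hilbert space which is compactly embedded in L₂(μ) (its unit ball B_H is convex and L₂-compact), and let Y ∈ L₂. For r ≥ 1 let f_r* be the (unique) minimizer of f ↦ E(f(X) − Y)² over (r−1)B_H. Then the map r ↦ E(f_r*(X) − Y)² is continuous on [1, ∞). -/
/-!
Moving a point `x = a • k` of `a • K` to `b • k ∈ b • K` changes it by `(b - a) • k`, of norm at
most `M |b - a|` when `K` lies in the ball of radius `M`. Comparing the minimizer at `b` with this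
competitor shows that the minimal distance from `Y` to `t • K` is `M`-Lipschitz in `t`.
-/

open Pointwise

section

variable {E : Type*} [SeminormedAddCommGroup E] [NormedSpace ℝ E] {K : Set E} {M : NNReal}

theorem norm_sub_le_of_isMin_on_smul (hKM : ∀ k ∈ K, ‖k‖ ≤ M) {Y x y : E} {a b : ℝ}
    (hx : x ∈ a • K) (hy : ∀ g ∈ b • K, ‖y - Y‖ ≤ ‖g - Y‖) :
    ‖y - Y‖ ≤ ‖x - Y‖ + M * |b - a| := by
  obtain ⟨k, hk, rfl⟩ := hx
  have hshift : b • k - Y = (a • k - Y) + (b - a) • k := by module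
  calc ‖y - Y‖ ≤ ‖b • k - Y‖ := hy _ (Set.smul_mem_smul_set hk)
    _ ≤ ‖a • k - Y‖ + |b - a| * ‖k‖ := by
        rw [hshift, ← Real.norm_eq_abs, ← norm_smul]; exact norm_add_le _ _
    _ ≤ ‖a • k - Y‖ + M * |b - a| := by
        rw [mul_comm]; gcongr; exact hKM k hk

theorem lipschitzOnWith_norm_sub_of_isMin_on_smul (hKM : ∀ k ∈ K, ‖k‖ ≤ M) {Y : E}
    {f : ℝ → E} {S : Set ℝ} {a : ℝ} (hmem : ∀ t ∈ S, f t ∈ (t - a) • K)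
    (hmin : ∀ t ∈ S, ∀ g ∈ (t - a) • K, ‖f t - Y‖ ≤ ‖g - Y‖) :
    LipschitzOnWith M (fun t => ‖f t - Y‖) S := by
  refine LipschitzOnWith.of_dist_le_mul fun s hs t ht => ?_
  rw [Real.dist_eq, Real.dist_eq, abs_sub_le_iff]
  have hst := norm_sub_le_of_isMin_on_smul hKM (hmem t ht) (hmin s hs)
  have hts := norm_sub_le_of_isMin_on_smul hKM (hmem s hs) (hmin t ht)
  rw [sub_sub_sub_cancel_right] at hst hts
  rw [abs_sub_comm] at hts
  constructor <;> linarith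

end

theorem minimal_loss_continuous_general {E : Type*} [NormedAddCommGroup E]
    [InnerProductSpace ℝ E]
    (K : Set E) (hK : IsCompact K)
    (Y : E) (fstar : ℝ → E)
    (hmem : ∀ r, 1 ≤ r → fstar r ∈ (r - 1) • K)
    (hmin : ∀ r, 1 ≤ r → ∀ g ∈ (r - 1) • K, ‖fstar r - Y‖ ≤ ‖g - Y‖) :
    ContinuousOn (fun r => ‖fstar r - Y‖ ^ 2) (Set.Ici (1 : ℝ)) := by
  obtain ⟨M, -, hKM⟩ := hK.isBounded.exists_pos_norm_le
  have hlip : LipschitzOnWith M.toNNReal (fun r => ‖fstar r - Y‖) (Set.Ici 1) :=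
    lipschitzOnWith_norm_sub_of_isMin_on_smul
      (fun k hk => (hKM k hk).trans (Real.le_coe_toNNReal M)) hmem hmin
  exact hlip.continuousOn.pow 2

theorem minimal_loss_continuous {E : Type*} [NormedAddCommGroup E]
    [InnerProductSpace ℝ E]
    (K : Set E) (hKc : Convex ℝ K) (hK : IsCompact K) (h0 : (0 : E) ∈ K)
    (Y : E) (fstar : ℝ → E)
    (hmem : ∀ r, 1 ≤ r → fstar r ∈ (r - 1) • K)
    (hmin : ∀ r, 1 ≤ r → ∀ g ∈ (r - 1) • K, ‖fstar r - Y‖ ≤ ‖g - Y‖) :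
    ContinuousOn (fun r => ‖fstar r - Y‖ ^ 2) (Set.Ici (1 : ℝ)) :=
  minimal_loss_continuous_general K hK Y fstar hmem hmin
end

section
/- Let F be a convex class of functions bounded by b in sup norm, let Y be a random variable with |Y| ≤ b a.s., let f* be the L₂-minimizer of f ↦ E(f(X) − Y)² over F, and define the excess loss L_f = (f(X) − Y)² − (f*(X) − Y)². Then there is an absolute constant C such that for every f ∈ F, E L_f² ≤ C b² E L_f. -/
/-!
Since `f*` minimises the squared distance to `Y` over the convex set `F`, comparing it with
`f* + t (f - f*) ∈ F` and letting `t → 0⁺` gives the variational inequality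
`E[(f - f*)(f* - Y)] ≥ 0`. Expanding `L_f = (f - f*)² + 2 (f - f*)(f* - Y)` then yields
`E(f - f*)² ≤ E L_f`. Pointwise `L_f = (f - f*)(f + f* - 2Y)` with `|f + f* - 2Y| ≤ 4b`, so
`E L_f² ≤ 16 b² E(f - f*)² ≤ 16 b² E L_f`.
-/

open MeasureTheory Filter Set Topology

lemma nonneg_of_forall_Ioc_nonneg_add_mul {a c : ℝ} (h : ∀ t ∈ Ioc (0 : ℝ) 1, 0 ≤ a + t * c) :
    0 ≤ a := by
  have hlim : Tendsto (fun t : ℝ => a + t * c) (𝓝[>] 0) (𝓝 a) := by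
    have hcont : Continuous fun t : ℝ => a + t * c := by fun_prop
    exact (hcont.tendsto' 0 a (by simp)).mono_left nhdsWithin_le_nhds
  exact ge_of_tendsto hlim (eventually_of_mem (Ioc_mem_nhdsGT one_pos) h)

lemma sq_sub_sq_sub_sq_le {a c y b : ℝ} (ha : |a| ≤ b) (hc : |c| ≤ b) (hy : |y| ≤ b) :
    ((a - y) ^ 2 - (c - y) ^ 2) ^ 2 ≤ 16 * b ^ 2 * (a - c) ^ 2 := by
  have hsum : |a + c - 2 * y| ≤ 4 * b := by
    rw [abs_le] at *
    constructor <;> linarith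
  calc ((a - y) ^ 2 - (c - y) ^ 2) ^ 2 = (a - c) ^ 2 * |a + c - 2 * y| ^ 2 := by
        rw [sq_abs]; ring
    _ ≤ (a - c) ^ 2 * (4 * b) ^ 2 := by gcongr
    _ = 16 * b ^ 2 * (a - c) ^ 2 := by ring

section ExcessLoss

variable {Ω : Type*} [MeasurableSpace Ω] {μ : Measure Ω} {Y g f : Ω → ℝ}

lemma integral_sq_sub_sub_sq_sub (hfg : MemLp (f - g) 2 μ) (hgY : MemLp (g - Y) 2 μ) (t : ℝ) :
    ∫ ω, (g ω + t * (f ω - g ω) - Y ω) ^ 2 ∂μ - ∫ ω, (g ω - Y ω) ^ 2 ∂μ =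
      2 * t * ∫ ω, (f ω - g ω) * (g ω - Y ω) ∂μ + t ^ 2 * ∫ ω, (f ω - g ω) ^ 2 ∂μ := by
  have hmul : Integrable (fun ω => (f ω - g ω) * (g ω - Y ω)) μ := hfg.integrable_mul hgY
  have hsq : Integrable (fun ω => (f ω - g ω) ^ 2) μ := hfg.integrable_sq
  have hexpand : ∀ ω, (g ω + t * (f ω - g ω) - Y ω) ^ 2 - (g ω - Y ω) ^ 2 =
      2 * t * ((f ω - g ω) * (g ω - Y ω)) + t ^ 2 * (f ω - g ω) ^ 2 := fun ω => by ring
  have hgY_sq : Integrable (fun ω => (g ω - Y ω) ^ 2) μ := hgY.integrable_sq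
  have hpath_sq : Integrable (fun ω => (g ω + t * (f ω - g ω) - Y ω) ^ 2) μ :=
    (hgY_sq.add ((hmul.const_mul (2 * t)).add (hsq.const_mul (t ^ 2)))).congr
      (ae_of_all _ fun ω => by simp only [Pi.add_apply]; linarith [hexpand ω])
  rw [← integral_sub hpath_sq hgY_sq]
  simp only [hexpand]
  rw [integral_add (hmul.const_mul _) (hsq.const_mul _), integral_const_mul, integral_const_mul]

lemma integral_mul_sub_nonneg_of_convex {F : Set (Ω → ℝ)} (hF : Convex ℝ F) (hg : g ∈ F)
    (hmin : ∀ h ∈ F, ∫ ω, (g ω - Y ω) ^ 2 ∂μ ≤ ∫ ω, (h ω - Y ω) ^ 2 ∂μ) (hf : f ∈ F)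
    (hfg : MemLp (f - g) 2 μ) (hgY : MemLp (g - Y) 2 μ) :
    0 ≤ ∫ ω, (f ω - g ω) * (g ω - Y ω) ∂μ := by
  refine nonneg_of_forall_Ioc_nonneg_add_mul
    (c := (∫ ω, (f ω - g ω) ^ 2 ∂μ) / 2) fun t ⟨ht₀, ht₁⟩ => ?_
  have hmem : (1 - t) • g + t • f ∈ F := hF hg hf (by linarith) ht₀.le (by ring)
  have hle := hmin _ hmem
  have hpath : ∀ ω, ((1 - t) • g + t • f) ω = g ω + t * (f ω - g ω) := fun ω => by
    simp only [Pi.add_apply, Pi.smul_apply, smul_eq_mul]; ring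
  simp only [hpath] at hle
  have := integral_sq_sub_sub_sq_sub hfg hgY t
  nlinarith

lemma integral_sq_sub_le_integral_excessLoss {F : Set (Ω → ℝ)} (hF : Convex ℝ F) (hg : g ∈ F)
    (hmin : ∀ h ∈ F, ∫ ω, (g ω - Y ω) ^ 2 ∂μ ≤ ∫ ω, (h ω - Y ω) ^ 2 ∂μ) (hf : f ∈ F)
    (hfg : MemLp (f - g) 2 μ) (hgY : MemLp (g - Y) 2 μ) :
    ∫ ω, (f ω - g ω) ^ 2 ∂μ ≤ ∫ ω, ((f ω - Y ω) ^ 2 - (g ω - Y ω) ^ 2) ∂μ := by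
  have hvar := integral_mul_sub_nonneg_of_convex hF hg hmin hf hfg hgY
  have hexpand : ∀ ω, (f ω - Y ω) ^ 2 - (g ω - Y ω) ^ 2 =
      (f ω - g ω) ^ 2 + 2 * ((f ω - g ω) * (g ω - Y ω)) := fun ω => by ring
  have hsq : Integrable (fun ω => (f ω - g ω) ^ 2) μ := hfg.integrable_sq
  have hmul : Integrable (fun ω => (f ω - g ω) * (g ω - Y ω)) μ := hfg.integrable_mul hgY
  simp only [hexpand]
  rw [integral_add hsq (hmul.const_mul 2), integral_const_mul]
  linarith

end ExcessLoss

lemma memLp_of_abs_le {Ω : Type*} [MeasurableSpace Ω] {μ : Measure Ω} [IsFiniteMeasure μ]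
    {p : ENNReal} {h : Ω → ℝ} {c : ℝ} (hm : Measurable h) (hc : ∀ ω, |h ω| ≤ c) : MemLp h p μ :=
  .of_bound hm.aestronglyMeasurable c (ae_of_all _ hc)

theorem bernstein_condition_convex :
    ∃ C : ℝ, 0 < C ∧
      ∀ (Ω : Type) (_ : MeasurableSpace Ω) (μ : Measure Ω)
        (_ : IsProbabilityMeasure μ)
        (F : Set (Ω → ℝ)) (b : ℝ) (Y fstar : Ω → ℝ),
        0 < b → Convex ℝ F → (∀ f ∈ F, Measurable f) →
        (∀ f ∈ F, ∀ ω, |f ω| ≤ b) →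
        Measurable Y → (∀ ω, |Y ω| ≤ b) →
        fstar ∈ F →
        (∀ g ∈ F, ∫ ω, (fstar ω - Y ω) ^ 2 ∂μ ≤ ∫ ω, (g ω - Y ω) ^ 2 ∂μ) →
        ∀ f ∈ F,
          ∫ ω, ((f ω - Y ω) ^ 2 - (fstar ω - Y ω) ^ 2) ^ 2 ∂μ ≤
            C * b ^ 2 * ∫ ω, ((f ω - Y ω) ^ 2 - (fstar ω - Y ω) ^ 2) ∂μ := by
  refine ⟨16, by norm_num, ?_⟩
  intro Ω _ μ _ F b Y fstar _ hF hmeas hbdd hYm hYb hstar hmin f hf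
  have hfg : MemLp (f - fstar) 2 μ := memLp_of_abs_le ((hmeas f hf).sub (hmeas fstar hstar))
    fun ω => (abs_sub _ _).trans (add_le_add (hbdd f hf ω) (hbdd fstar hstar ω))
  have hgY : MemLp (fstar - Y) 2 μ := memLp_of_abs_le ((hmeas fstar hstar).sub hYm)
    fun ω => (abs_sub _ _).trans (add_le_add (hbdd fstar hstar ω) (hYb ω))
  calc ∫ ω, ((f ω - Y ω) ^ 2 - (fstar ω - Y ω) ^ 2) ^ 2 ∂μ
      ≤ ∫ ω, 16 * b ^ 2 * (f ω - fstar ω) ^ 2 ∂μ :=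
        integral_mono_of_nonneg (ae_of_all _ fun _ => sq_nonneg _)
          (hfg.integrable_sq.const_mul _)
          (ae_of_all _ fun ω => sq_sub_sq_sub_sq_le (hbdd f hf ω) (hbdd fstar hstar ω) (hYb ω))
    _ = 16 * b ^ 2 * ∫ ω, (f ω - fstar ω) ^ 2 ∂μ := integral_const_mul _ _
    _ ≤ 16 * b ^ 2 * ∫ ω, ((f ω - Y ω) ^ 2 - (fstar ω - Y ω) ^ 2) ∂μ :=
      mul_le_mul_of_nonneg_left
        (integral_sq_sub_le_integral_excessLoss hF hstar hmin hf hfg hgY) (by positivity)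
end

section
/- Let ρ : [1,∞) × (0,∞) → (0,∞) be continuous and increasing in both arguments, and let P ℓ(f_r*) be a nonincreasing nonnegative continuous function of r. Define recursively r₁ = 1 and, for i ≥ 2, r_i to be the largest number satisfying both r_i ≤ 2 r_{i−1} and P ℓ(f_{r_{i−1}}*) − P ℓ(f_{r_i}*) ≤ ρ(r_i, u_i) with u_i = u + ln(π²/6) + 2 ln i, where at each step either r_i = 2r_{i−1} or equality holds in the second constraint. Then for all i ≥ 1, i ≤ P ℓ(f_{r_1}*)/ρ(r_1, u_1) + log₂(2 r_i); in particular r_i → ∞ as i → ∞. -/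
/-!
Each step of the recursion either doubles the radius, which raises `logb 2 (2 * r i)` by one, or
lowers the optimal loss by `ρ (r i) (u i) ≥ ρ (r 1) (u 1)`, which raises the normalised loss drop
`(ℓ (r 1) - ℓ (r i)) / ρ (r 1) (u 1)` by one. Both quantities are nondecreasing, so their sum
grows at least by one per step; since `ℓ ≥ 0`, the loss drop is at most `ℓ (r 1) / ρ (r 1) (u 1)`.
-/

open Real Filter

theorem nat_le_div_add_logb_of_double_or_drop {c : ℝ} (hc : 0 < c) {r L : ℕ → ℝ}
    (hr₀ : 0 < r 0) (hr : Monotone r) (hL : Antitone L)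
    (hstep : ∀ n, r (n + 1) = 2 * r n ∨ c ≤ L n - L (n + 1)) (n : ℕ) :
    (n : ℝ) ≤ (L 0 - L n) / c + logb 2 (r n / r 0) := by
  induction n with
  | zero => simp [hr₀.ne']
  | succ n ih =>
    have hrn : 0 < r n / r 0 := div_pos (hr₀.trans_le (hr n.zero_le)) hr₀
    rcases hstep n with hdouble | hdrop
    · have hlog : logb 2 (r (n + 1) / r 0) = logb 2 (r n / r 0) + 1 := by
        rw [hdouble, mul_div_assoc, logb_mul two_ne_zero hrn.ne', logb_self_eq_one one_lt_two,
          add_comm]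
      have hloss : (L 0 - L n) / c ≤ (L 0 - L (n + 1)) / c := by
        gcongr
        exact hL n.le_succ
      push_cast
      linarith
    · have hloss : (L 0 - L n) / c + 1 ≤ (L 0 - L (n + 1)) / c := by
        rw [div_add_one hc.ne', div_le_div_iff_of_pos_right hc]
        linarith
      have hlog : logb 2 (r n / r 0) ≤ logb 2 (r (n + 1) / r 0) :=
        logb_le_logb_of_le one_lt_two hrn (by gcongr; exact hr n.le_succ)
      push_cast
      linarith

theorem nat_add_one_le_div_add_logb_of_double_or_drop {c : ℝ} (hc : 0 < c) {r L : ℕ → ℝ}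
    (hr₀ : r 0 = 1) (hr : Monotone r) (hL : Antitone L) (hL_nonneg : ∀ n, 0 ≤ L n)
    (hstep : ∀ n, r (n + 1) = 2 * r n ∨ c ≤ L n - L (n + 1)) (n : ℕ) :
    (n : ℝ) + 1 ≤ L 0 / c + logb 2 (2 * r n) := by
  have hcount := nat_le_div_add_logb_of_double_or_drop hc (hr₀ ▸ one_pos) hr hL hstep n
  have hloss : (L 0 - L n) / c ≤ L 0 / c := by
    gcongr
    linarith [hL_nonneg n]
  have hrn : 0 < r n := (hr₀ ▸ one_pos).trans_le (hr n.zero_le)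
  rw [hr₀, div_one] at hcount
  rw [logb_mul two_ne_zero hrn.ne', logb_self_eq_one one_lt_two]
  linarith

theorem tendsto_atTop_of_nat_le_add_logb {b C : ℝ} (hb : 1 < b) {g : ℕ → ℝ}
    (h : ∀ᶠ n in atTop, 0 < g n ∧ (n : ℝ) ≤ C + logb b (g n)) : Tendsto g atTop atTop := by
  have hpow : Tendsto (fun n : ℕ => b ^ ((n : ℝ) - C)) atTop atTop :=
    (tendsto_rpow_atTop_of_base_gt_one b hb).comp
      (tendsto_atTop_add_const_right _ _ tendsto_natCast_atTop_atTop)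
  refine tendsto_atTop_mono' _ ?_ hpow
  filter_upwards [h] with n ⟨hpos, hn⟩
  exact (le_logb_iff_rpow_le hb hpos).1 (by linarith)

theorem radius_counting_lemma_general (ρ : ℝ → ℝ → ℝ)
    (hρpos : ∀ r x, 1 ≤ r → 0 < x → 0 < ρ r x)
    (hρr : ∀ x, Monotone fun r => ρ r x)
    (hρu : ∀ r, Monotone (ρ r))
    (ℓ : ℝ → ℝ) (hℓmono : AntitoneOn ℓ (Set.Ici 1))
    (hℓ0 : ∀ r, 1 ≤ r → 0 ≤ ℓ r)
    (u : ℝ) (hu : 0 < u)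
    (r : ℕ → ℝ) (hr1 : r 1 = 1)
    (hmono : ∀ i, 2 ≤ i → r (i - 1) ≤ r i)
    (hrec : ∀ i, 2 ≤ i →
      r i ≤ 2 * r (i - 1) ∧
      ℓ (r (i - 1)) - ℓ (r i) ≤ ρ (r i) (u + Real.log (π ^ 2 / 6) + 2 * Real.log i) ∧
      (r i = 2 * r (i - 1) ∨
        ℓ (r (i - 1)) - ℓ (r i) = ρ (r i) (u + Real.log (π ^ 2 / 6) + 2 * Real.log i))) :
    (∀ i : ℕ, 1 ≤ i →
      (i : ℝ) ≤ ℓ (r 1) / ρ (r 1) (u + Real.log (π ^ 2 / 6) + 2 * Real.log 1) +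
        Real.logb 2 (2 * r i)) ∧
    Tendsto (fun i => r i) atTop atTop := by
  set c := ρ (r 1) (u + Real.log (π ^ 2 / 6) + 2 * Real.log 1)
  have hlogπ : 0 < Real.log (π ^ 2 / 6) := Real.log_pos (by nlinarith [pi_gt_three])
  have hc : 0 < c := hρpos _ _ hr1.ge (by rw [Real.log_one]; linarith)
  have hs : Monotone fun n => r (n + 1) :=
    monotone_nat_of_le_succ fun n => hmono (n + 2) (by omega)
  have hs₁ : ∀ n, 1 ≤ r (n + 1) := fun n => hr1 ▸ hs n.zero_le
  have hL : Antitone fun n => ℓ (r (n + 1)) := fun m n hmn => hℓmono (hs₁ m) (hs₁ n) (hs hmn)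
  have hstep : ∀ n, r (n + 2) = 2 * r (n + 1) ∨ c ≤ ℓ (r (n + 1)) - ℓ (r (n + 2)) := by
    intro n
    obtain ⟨-, -, hdouble | hdrop⟩ := hrec (n + 2) (by omega)
    · exact .inl hdouble
    · refine .inr (hdrop ▸ ?_)
      calc c ≤ ρ (r (n + 2)) (u + Real.log (π ^ 2 / 6) + 2 * Real.log 1) :=
            hρr _ (hr1 ▸ hs₁ (n + 1))
        _ ≤ _ := hρu _ (by gcongr; exact_mod_cast (by omega : 1 ≤ n + 2))
  have hbound : ∀ i : ℕ, 1 ≤ i → (i : ℝ) ≤ ℓ (r 1) / c + Real.logb 2 (2 * r i) := by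
    intro i hi
    obtain ⟨n, rfl⟩ := Nat.exists_eq_add_of_le' hi
    push_cast
    exact nat_add_one_le_div_add_logb_of_double_or_drop hc hr1 hs hL
      (fun n => hℓ0 _ (hs₁ n)) hstep n
  refine ⟨hbound, (tendsto_const_mul_atTop_of_pos two_pos).1 ?_⟩
  refine tendsto_atTop_of_nat_le_add_logb (C := ℓ (r 1) / c) one_lt_two ?_
  filter_upwards [eventually_ge_atTop 1] with i hi
  obtain ⟨n, rfl⟩ := Nat.exists_eq_add_of_le' hi
  exact ⟨by linarith [hs₁ n], hbound _ hi⟩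

theorem radius_counting_lemma (ρ : ℝ → ℝ → ℝ)
    (hρc : Continuous fun q : ℝ × ℝ => ρ q.1 q.2)
    (hρpos : ∀ r x, 1 ≤ r → 0 < x → 0 < ρ r x)
    (hρr : ∀ x, Monotone fun r => ρ r x)
    (hρu : ∀ r, Monotone (ρ r))
    (ℓ : ℝ → ℝ) (hℓmono : AntitoneOn ℓ (Set.Ici 1))
    (hℓ0 : ∀ r, 1 ≤ r → 0 ≤ ℓ r) (hℓc : ContinuousOn ℓ (Set.Ici 1))
    (u : ℝ) (hu : 0 < u)
    (r : ℕ → ℝ) (hr1 : r 1 = 1)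
    (hmono : ∀ i, 2 ≤ i → r (i - 1) ≤ r i)
    (hrec : ∀ i, 2 ≤ i →
      r i ≤ 2 * r (i - 1) ∧
      ℓ (r (i - 1)) - ℓ (r i) ≤ ρ (r i) (u + Real.log (π ^ 2 / 6) + 2 * Real.log i) ∧
      (r i = 2 * r (i - 1) ∨
        ℓ (r (i - 1)) - ℓ (r i) = ρ (r i) (u + Real.log (π ^ 2 / 6) + 2 * Real.log i))) :
    (∀ i : ℕ, 1 ≤ i →
      (i : ℝ) ≤ ℓ (r 1) / ρ (r 1) (u + Real.log (π ^ 2 / 6) + 2 * Real.log 1) +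
        Real.logb 2 (2 * r i)) ∧
    Tendsto (fun i => r i) atTop atTop :=
  radius_counting_lemma_general ρ hρpos hρr hρu ℓ hℓmono hℓ0 u hu r hr1 hmono hrec
end
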